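/- Any basic feasible solution (vertex) of the polytope { y ≥ 0 : ∑_{u∈L₁} y_u ≤ k₁, ∑_{v∈L₂} y_v ≤ k₂, y_{p(v)} + y_v ≤ 1 for all v ∈ L₂ } has at most 2 loose variables, where y_v is loose if 0 < y_v < 1 and, in case v ∈ L₂, additionally y_{p(v)} = 0. -/

import Mathlib

open scoped Classical

/-!
Each loose coordinate `i` of `y` yields a direction `looseDir p y i` that vanishes where `y`
does and keeps every tight parent–child constraint tight; these directions are linearly
independent, since on the loose coordinates they restrict to the unit vectors. Only the two
budget constraints are not controlled, and they cut out a subspace of codimension at most two.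
So with three loose coordinates some nonzero combination `d` also preserves both budget sums,
`y ± ε d` stays in the polytope for small `ε > 0`, and `y` is not an extreme point.
-/

open Filter Topology

theorem eq_zero_of_add_mem_of_sub_mem_of_mem_extremePoints {𝕜 E : Type*} [Field 𝕜]
    [LinearOrder 𝕜] [IsStrictOrderedRing 𝕜] [AddCommGroup E] [Module 𝕜 E] {A : Set E}
    {x d : E} (hx : x ∈ A.extremePoints 𝕜) (hadd : x + d ∈ A) (hsub : x - d ∈ A) : d = 0 := by
  have hseg : x ∈ openSegment 𝕜 (x + d) (x - d) :=
    ⟨1 / 2, 1 / 2, by norm_num, by norm_num, by norm_num, by module⟩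
  simpa using hx.2 hadd hsub hseg

lemma eventually_nonneg_add_mul {a c : ℝ} (ha : 0 ≤ a) (hc : a = 0 → c = 0) :
    ∀ᶠ ε in 𝓝 (0 : ℝ), 0 ≤ a + ε * c := by
  rcases ha.eq_or_lt with rfl | ha
  · simp [hc rfl]
  · have : Tendsto (fun ε : ℝ => a + ε * c) (𝓝 0) (𝓝 a) := by
      simpa using (by fun_prop : Continuous fun ε : ℝ => a + ε * c).tendsto 0
    exact this.eventually (eventually_ge_nhds ha)

namespace Firefighter

variable {L₁ L₂ : Type*} (p : L₂ → L₁)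

def polytope [Fintype L₁] [Fintype L₂] (k₁ k₂ : ℕ) : Set ((L₁ ⊕ L₂) → ℝ) :=
  {y | (∀ i, 0 ≤ y i) ∧
    (∑ u, y (Sum.inl u)) ≤ (k₁ : ℝ) ∧
    (∑ v, y (Sum.inr v)) ≤ (k₂ : ℝ) ∧
    ∀ v : L₂, y (Sum.inl (p v)) + y (Sum.inr v) ≤ 1}

def looseSet (y : (L₁ ⊕ L₂) → ℝ) : Set (L₁ ⊕ L₂) :=
  {i | (0 < y i ∧ y i < 1) ∧ ∀ v : L₂, i = Sum.inr v → y (Sum.inl (p v)) = 0}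

def levelSums [Fintype L₁] [Fintype L₂] : ((L₁ ⊕ L₂) → ℝ) →ₗ[ℝ] ℝ × ℝ where
  toFun d := (∑ u, d (Sum.inl u), ∑ v, d (Sum.inr v))
  map_add' d e := by simp [Finset.sum_add_distrib]
  map_smul' c d := by simp [Finset.mul_sum]

def tightDirections (y : (L₁ ⊕ L₂) → ℝ) : Submodule ℝ ((L₁ ⊕ L₂) → ℝ) where
  carrier := {d | (∀ i, y i = 0 → d i = 0) ∧
    ∀ v, y (Sum.inl (p v)) + y (Sum.inr v) = 1 → d (Sum.inl (p v)) + d (Sum.inr v) = 0}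
  add_mem' {d e} hd he := ⟨fun i hi => by simp [hd.1 i hi, he.1 i hi],
    fun v hv => by simp only [Pi.add_apply]; linarith [hd.2 v hv, he.2 v hv]⟩
  zero_mem' := ⟨fun _ _ => rfl, fun _ _ => by simp⟩
  smul_mem' c d hd := ⟨fun i hi => by simp [hd.1 i hi],
    fun v hv => by simp only [Pi.smul_apply, smul_eq_mul, ← mul_add, hd.2 v hv, mul_zero]⟩

/-- Raising a loose parent `u` forces lowering every child `v` with `y u + y v = 1`; a loose
child has its parent at `0`, so its own constraint is slack and it moves alone. -/
noncomputable def looseDir (y : (L₁ ⊕ L₂) → ℝ) : (L₁ ⊕ L₂) → (L₁ ⊕ L₂) → ℝ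
  | .inl u, .inl u' => if u' = u then 1 else 0
  | .inl u, .inr v => if p v = u ∧ y (Sum.inl u) + y (Sum.inr v) = 1 then -1 else 0
  | .inr _, .inl _ => 0
  | .inr w, .inr w' => if w' = w then 1 else 0

variable {p}

lemma eventually_add_smul_mem_polytope [Fintype L₁] [Fintype L₂] {k₁ k₂ : ℕ}
    {y d : (L₁ ⊕ L₂) → ℝ} (hy : y ∈ polytope p k₁ k₂) (hd : d ∈ tightDirections p y)
    (hsums : levelSums d = 0) : ∀ᶠ ε in 𝓝 (0 : ℝ), y + ε • d ∈ polytope p k₁ k₂ := by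
  obtain ⟨hy₀, hy₁, hy₂, hpair⟩ := hy
  obtain ⟨hd₀, hdpair⟩ := hd
  obtain ⟨hd₁, hd₂⟩ := Prod.ext_iff.mp hsums
  simp only [levelSums, LinearMap.coe_mk, AddHom.coe_mk, Prod.fst_zero, Prod.snd_zero]
    at hd₁ hd₂
  have hnonneg := eventually_all.2 fun i => eventually_nonneg_add_mul (hy₀ i) (hd₀ i)
  have hslack := eventually_all.2 fun v =>
    eventually_nonneg_add_mul (c := -(d (Sum.inl (p v)) + d (Sum.inr v)))
      (sub_nonneg.2 (hpair v)) fun h => by rw [hdpair v (by linarith), neg_zero]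
  filter_upwards [hnonneg, hslack] with ε hε₀ hεpair
  simp only [polytope, Set.mem_ofPred_eq, Pi.add_apply, Pi.smul_apply, smul_eq_mul,
    Finset.sum_add_distrib, ← Finset.mul_sum, hd₁, hd₂, mul_zero, add_zero]
  exact ⟨hε₀, hy₁, hy₂, fun v => by linarith [hεpair v]⟩

lemma eq_zero_of_mem_tightDirections [Fintype L₁] [Fintype L₂] {k₁ k₂ : ℕ}
    {y d : (L₁ ⊕ L₂) → ℝ} (hy : y ∈ (polytope p k₁ k₂).extremePoints ℝ)
    (hd : d ∈ tightDirections p y) (hsums : levelSums d = 0) : d = 0 := by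
  have hneg : levelSums (-d) = 0 := by rw [map_neg, hsums, neg_zero]
  have hboth := (eventually_add_smul_mem_polytope hy.1 hd hsums).and
    (eventually_add_smul_mem_polytope hy.1 (neg_mem hd) hneg)
  obtain ⟨ε, hε, hadd, hsub⟩ := (eventually_mem_nhdsWithin.and
    (hboth.filter_mono (nhdsWithin_le_nhds (s := Set.Ioi 0)))).exists
  rw [smul_neg, ← sub_eq_add_neg] at hsub
  have hεd := eq_zero_of_add_mem_of_sub_mem_of_mem_extremePoints hy hadd hsub
  exact (smul_eq_zero.mp hεd).resolve_left hε.ne'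

lemma looseDir_mem_tightDirections {y : (L₁ ⊕ L₂) → ℝ} {i : L₁ ⊕ L₂}
    (hi : i ∈ looseSet p y) : looseDir p y i ∈ tightDirections p y := by
  obtain ⟨⟨hpos, hlt⟩, hroot⟩ := hi
  refine ⟨fun j hj => ?_, fun v hv => ?_⟩
  · rcases i with u | w <;> rcases j with u' | v <;> simp only [looseDir] <;> grind
  · rcases i with u | w <;> simp only [looseDir] <;> grind

lemma looseDir_apply_of_mem_looseSet {y : (L₁ ⊕ L₂) → ℝ} (i : L₁ ⊕ L₂) {j : L₁ ⊕ L₂}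
    (hj : j ∈ looseSet p y) : looseDir p y i j = if j = i then 1 else 0 := by
  obtain ⟨⟨-, hlt⟩, hroot⟩ := hj
  rcases i with u | w <;> rcases j with u' | v <;> simp only [looseDir] <;> grind

lemma linearIndependent_looseDir {y : (L₁ ⊕ L₂) → ℝ} :
    LinearIndependent ℝ fun i : looseSet p y => looseDir p y i := by
  refine LinearIndependent.of_comp (LinearMap.funLeft ℝ ℝ ((↑) : looseSet p y → L₁ ⊕ L₂)) ?_
  convert Pi.linearIndependent_single_one (looseSet p y) ℝ with i
  ext j
  simp [LinearMap.funLeft_apply, looseDir_apply_of_mem_looseSet _ j.2, Pi.single_apply,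
    Subtype.ext_iff]

end Firefighter

open Firefighter Submodule in
theorem stmt_5 {L₁ L₂ : Type*} [Fintype L₁] [Fintype L₂]
    (p : L₂ → L₁) (k₁ k₂ : ℕ)
    (P : Set ((L₁ ⊕ L₂) → ℝ))
    (hP : P = {y | (∀ i, 0 ≤ y i) ∧
        (∑ u, y (Sum.inl u)) ≤ (k₁ : ℝ) ∧
        (∑ v, y (Sum.inr v)) ≤ (k₂ : ℝ) ∧
        ∀ v : L₂, y (Sum.inl (p v)) + y (Sum.inr v) ≤ 1})
    (y : (L₁ ⊕ L₂) → ℝ) (hy : y ∈ Set.extremePoints ℝ P) :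
    ({i : L₁ ⊕ L₂ | (0 < y i ∧ y i < 1) ∧
        (∀ v : L₂, i = Sum.inr v → y (Sum.inl (p v)) = 0)}).ncard ≤ 2 := by
  subst hP
  change y ∈ (polytope p k₁ k₂).extremePoints ℝ at hy
  have hdisj : Disjoint (span ℝ (Set.range fun i : looseSet p y => looseDir p y i))
      (LinearMap.ker levelSums) := by
    refine disjoint_def.2 fun d hd hsums => eq_zero_of_mem_tightDirections hy ?_ hsums
    exact span_le.2 (Set.range_subset_iff.2 fun i => looseDir_mem_tightDirections i.2) hd
  have hcard := (linearIndependent_looseDir.map hdisj).fintype_card_le_finrank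
  rw [Module.finrank_prod, Module.finrank_self] at hcard
  change (looseSet p y).ncard ≤ 2
  rwa [← Nat.card_coe_set_eq, Nat.card_eq_fintype_card]
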